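/- Let n ≥ 2 be an integer, let ν ∈ ℝ³ be a unit vector and s ∈ ℝ, and let L = {x ∈ ℝ³ : ⟨x, ν⟩ > s} be an open half-space. Suppose that for every ℓ ∈ {1, …, n} the rotation ψ_{ℓπ/n} by angle π around the horizontal axis ξ_{ℓπ/n} maps L onto either L or ℝ³ \ L up to a Lebesgue null set. Then s = 0, and: if n ≥ 3 then ν = (0,0,1) or ν = (0,0,−1); if n = 2 then ν ∈ {±(1,0,0), ±(0,1,0), ±(0,0,1)}. In particular, for n ≥ 3 the only such equivariant half-spaces are the open upper and lower half-spaces. -/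

import Mathlib

open MeasureTheory
open scoped symmDiff RealInnerProductSpace

/-- The rotation by angle `π` around the horizontal axis
`ξ_θ = {(r cos θ, r sin θ, 0) : r ∈ ℝ}`:
`ψ_θ(x₁, x₂, x₃) = (x₁ cos 2θ + x₂ sin 2θ, x₁ sin 2θ − x₂ cos 2θ, −x₃)`. -/
noncomputable def psiRot (θ : ℝ) (x : EuclideanSpace ℝ (Fin 3)) :
    EuclideanSpace ℝ (Fin 3) :=
  (WithLp.equiv 2 (Fin 3 → ℝ)).symm
    ![x 0 * Real.cos (2 * θ) + x 1 * Real.sin (2 * θ),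
      x 0 * Real.sin (2 * θ) - x 1 * Real.cos (2 * θ),
      -x 2]

/-- Standard basis vectors of `ℝ³`. -/
noncomputable def e₁ : EuclideanSpace ℝ (Fin 3) := (WithLp.equiv 2 (Fin 3 → ℝ)).symm ![1, 0, 0]
noncomputable def e₂ : EuclideanSpace ℝ (Fin 3) := (WithLp.equiv 2 (Fin 3 → ℝ)).symm ![0, 1, 0]
noncomputable def e₃ : EuclideanSpace ℝ (Fin 3) := (WithLp.equiv 2 (Fin 3 → ℝ)).symm ![0, 0, 1]

/-!
A half-space `{s < ⟪x, ν⟫}` with unit normal determines `(ν, s)` even up to null sets, since a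
null open set is empty, and its complement agrees a.e. with `{-s < ⟪x, -ν⟫}`. As `ψ_θ` is a
self-adjoint involution, it maps `{s < ⟪x, ν⟫}` onto `{s < ⟪x, ψ_θ ν⟫}`, so each hypothesis
forces either `ψ_θ ν = ν` (`ν` lies on the axis `ξ_θ`) or `ψ_θ ν = -ν` (`ν ⊥ ξ_θ`) and `s = 0`.
The angles `θ = π` (axis `ℝ e₁`) and `θ = π / n` alone then pin down `ν`.
-/

section Halfspace

variable {E : Type*} [NormedAddCommGroup E] [InnerProductSpace ℝ E]

/-- If `a ≠ b`, the points `r • (a - b)` with `r → ∞` eventually lie in `{s < ⟪x, a⟫}` but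
not in `{t ≤ ⟪x, b⟫}`. -/
theorem eq_and_le_of_halfspace_subset {a b : E} (ha : ‖a‖ = 1) (hb : ‖b‖ = 1) {s t : ℝ}
    (h : ∀ x, s < ⟪x, a⟫ → t ≤ ⟪x, b⟫) : a = b ∧ t ≤ s := by
  have hab : a = b := by
    by_contra hne
    have hδ : 0 < 1 - ⟪a, b⟫ := sub_pos.2 ((inner_lt_one_iff_real_of_norm_eq_one ha hb).2 hne)
    set r := (|s| + |t| + 1) / (1 - ⟪a, b⟫)
    have hr : r * (1 - ⟪a, b⟫) = |s| + |t| + 1 := div_mul_cancel₀ _ hδ.ne'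
    have hxa : ⟪r • (a - b), a⟫ = r * (1 - ⟪a, b⟫) := by
      rw [real_inner_smul_left, inner_sub_left, real_inner_self_eq_norm_sq, ha, real_inner_comm]
      ring
    have hxb : ⟪r • (a - b), b⟫ = -(r * (1 - ⟪a, b⟫)) := by
      rw [real_inner_smul_left, inner_sub_left, real_inner_self_eq_norm_sq, hb]
      ring
    have := h (r • (a - b)) (by rw [hxa, hr]; linarith [le_abs_self s, abs_nonneg t])
    rw [hxb, hr] at this
    linarith [neg_abs_le t, abs_nonneg s]
  subst hab
  refine ⟨rfl, not_lt.1 fun hst => ?_⟩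
  have hx : ⟪((s + t) / 2) • a, a⟫ = (s + t) / 2 := by
    rw [real_inner_smul_left, real_inner_self_eq_norm_sq, ha, one_pow, mul_one]
  have := h (((s + t) / 2) • a) (by rw [hx]; linarith)
  rw [hx] at this
  linarith

variable [MeasurableSpace E] (μ : Measure E) [μ.IsOpenPosMeasure]

theorem eq_and_le_of_measure_halfspace_inter_eq_zero {a b : E} (ha : ‖a‖ = 1) (hb : ‖b‖ = 1)
    {s t : ℝ} (h : μ ({x | s < ⟪x, a⟫} ∩ {x | ⟪x, b⟫ < t}) = 0) : a = b ∧ t ≤ s := by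
  have hopen : IsOpen ({x | s < ⟪x, a⟫} ∩ {x | ⟪x, b⟫ < t}) :=
    (isOpen_lt continuous_const (continuous_id.inner continuous_const)).inter
      (isOpen_lt (continuous_id.inner continuous_const) continuous_const)
  have hempty := (hopen.measure_eq_zero_iff μ).1 h
  exact eq_and_le_of_halfspace_subset ha hb fun x hxa =>
    not_lt.1 fun hxb => hempty.subset ⟨hxa, hxb⟩

theorem eq_of_measure_halfspace_symmDiff_eq_zero {a b : E} (ha : ‖a‖ = 1) (hb : ‖b‖ = 1)
    {s t : ℝ} (h : μ ({x | s < ⟪x, a⟫} ∆ {x | t < ⟪x, b⟫}) = 0) : a = b ∧ s = t := by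
  have hab : μ ({x | s < ⟪x, a⟫} ∩ {x | ⟪x, b⟫ < t}) = 0 := by
    refine measure_mono_null (fun x hx => ?_) h
    simp only [Set.mem_inter_iff, Set.mem_ofPred_eq] at hx
    simp [Set.mem_symmDiff, hx.1, hx.2.le]
  have hba : μ ({x | t < ⟪x, b⟫} ∩ {x | ⟪x, a⟫ < s}) = 0 := by
    refine measure_mono_null (fun x hx => ?_) h
    simp only [Set.mem_inter_iff, Set.mem_ofPred_eq] at hx
    simp [Set.mem_symmDiff, hx.1, hx.2.le]
  obtain ⟨rfl, hts⟩ := eq_and_le_of_measure_halfspace_inter_eq_zero μ ha hb hab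
  exact ⟨rfl, le_antisymm (eq_and_le_of_measure_halfspace_inter_eq_zero μ ha ha hba).2 hts⟩

theorem eq_neg_of_measure_halfspace_symmDiff_compl_eq_zero {a b : E} (ha : ‖a‖ = 1)
    (hb : ‖b‖ = 1) {s t : ℝ} (h : μ ({x | s < ⟪x, a⟫} ∆ {x | t < ⟪x, b⟫}ᶜ) = 0) :
    a = -b ∧ s = -t := by
  have hb' : ‖-b‖ = 1 := by rwa [norm_neg]
  have hab : μ ({x | s < ⟪x, a⟫} ∩ {x | ⟪x, -b⟫ < -t}) = 0 := by
    refine measure_mono_null (fun x hx => ?_) h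
    simp only [Set.mem_inter_iff, Set.mem_ofPred_eq, inner_neg_right, neg_lt_neg_iff] at hx
    simp [Set.mem_symmDiff, hx.1, hx.2]
  have hba : μ ({x | -t < ⟪x, -b⟫} ∩ {x | ⟪x, a⟫ < s}) = 0 := by
    refine measure_mono_null (fun x hx => ?_) h
    simp only [Set.mem_inter_iff, Set.mem_ofPred_eq, inner_neg_right, neg_lt_neg_iff] at hx
    simp [Set.mem_symmDiff, hx.1.le, hx.2.le]
  obtain ⟨rfl, hts⟩ := eq_and_le_of_measure_halfspace_inter_eq_zero μ ha hb' hab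
  exact ⟨rfl, le_antisymm (eq_and_le_of_measure_halfspace_inter_eq_zero μ hb' hb' hba).2 hts⟩

end Halfspace

section SelfAdjointInvolution

variable {E : Type*} [NormedAddCommGroup E] [InnerProductSpace ℝ E] {f : E → E}

theorem image_halfspace_of_involutive (hf : Function.Involutive f)
    (hadj : ∀ x y, ⟪f x, y⟫ = ⟪x, f y⟫) (ν : E) (s : ℝ) :
    f '' {x | s < ⟪x, ν⟫} = {x | s < ⟪x, f ν⟫} := by
  rw [hf.image_eq_preimage_symm]
  ext x
  simp only [Set.mem_preimage, Set.mem_ofPred_eq, hadj]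

theorem norm_apply_of_involutive (hf : Function.Involutive f)
    (hadj : ∀ x y, ⟪f x, y⟫ = ⟪x, f y⟫) (x : E) : ‖f x‖ = ‖x‖ := by
  have h : ‖f x‖ ^ 2 = ‖x‖ ^ 2 := by
    rw [← real_inner_self_eq_norm_sq, ← real_inner_self_eq_norm_sq, hadj, hf x]
  exact (sq_eq_sq₀ (norm_nonneg _) (norm_nonneg _)).1 h

variable [MeasurableSpace E] (μ : Measure E) [μ.IsOpenPosMeasure]

theorem apply_eq_self_or_eq_neg_of_image_halfspace (hf : Function.Involutive f)
    (hadj : ∀ x y, ⟪f x, y⟫ = ⟪x, f y⟫) {ν : E} (hν : ‖ν‖ = 1) {s : ℝ}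
    (h : μ ((f '' {x | s < ⟪x, ν⟫}) ∆ {x | s < ⟪x, ν⟫}) = 0 ∨
      μ ((f '' {x | s < ⟪x, ν⟫}) ∆ {x | s < ⟪x, ν⟫}ᶜ) = 0) :
    f ν = ν ∨ (f ν = -ν ∧ s = 0) := by
  have hfν : ‖f ν‖ = 1 := (norm_apply_of_involutive hf hadj ν).trans hν
  rw [image_halfspace_of_involutive hf hadj] at h
  refine h.imp (fun h => (eq_of_measure_halfspace_symmDiff_eq_zero μ hfν hν h).1) fun h => ?_
  obtain ⟨hneg, hs⟩ := eq_neg_of_measure_halfspace_symmDiff_compl_eq_zero μ hfν hν h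
  exact ⟨hneg, by linarith⟩

end SelfAdjointInvolution

theorem EuclideanSpace.eq_single_or_eq_neg_single_of_norm_eq_one {ι : Type*} [Fintype ι]
    [DecidableEq ι] {v : EuclideanSpace ℝ ι} (hv : ‖v‖ = 1) {i : ι} (h : ∀ j ≠ i, v j = 0) :
    v = EuclideanSpace.single i 1 ∨ v = -EuclideanSpace.single i 1 := by
  have hvi : v = EuclideanSpace.single i (v i) := by
    ext j
    by_cases hj : j = i
    · subst hj; simp
    · simp [hj, h j hj]
  rw [hvi, PiLp.norm_single, Real.norm_eq_abs] at hv
  rcases abs_eq zero_le_one |>.1 hv with h1 | h1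
  · exact .inl (hvi.trans (by rw [h1]))
  · exact .inr (hvi.trans (by rw [h1]; exact PiLp.single_neg 2 i))

local notation "ℝ³" => EuclideanSpace ℝ (Fin 3)

theorem EuclideanSpace.ext_fin_three {x y : ℝ³} (h0 : x 0 = y 0) (h1 : x 1 = y 1)
    (h2 : x 2 = y 2) : x = y := by
  ext i; fin_cases i
  exacts [h0, h1, h2]

theorem e₁_eq_single : e₁ = EuclideanSpace.single 0 1 := by
  ext i; fin_cases i <;> rfl

theorem e₂_eq_single : e₂ = EuclideanSpace.single 1 1 := by
  ext i; fin_cases i <;> rfl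

theorem e₃_eq_single : e₃ = EuclideanSpace.single 2 1 := by
  ext i; fin_cases i <;> rfl

theorem eq_e₁_or_eq_neg_e₁ {ν : ℝ³} (hν : ‖ν‖ = 1) (h1 : ν 1 = 0) (h2 : ν 2 = 0) :
    ν = e₁ ∨ ν = -e₁ := by
  rw [e₁_eq_single]
  exact EuclideanSpace.eq_single_or_eq_neg_single_of_norm_eq_one hν fun j hj => by
    fin_cases j <;> simp_all

theorem eq_e₂_or_eq_neg_e₂ {ν : ℝ³} (hν : ‖ν‖ = 1) (h0 : ν 0 = 0) (h2 : ν 2 = 0) :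
    ν = e₂ ∨ ν = -e₂ := by
  rw [e₂_eq_single]
  exact EuclideanSpace.eq_single_or_eq_neg_single_of_norm_eq_one hν fun j hj => by
    fin_cases j <;> simp_all

theorem eq_e₃_or_eq_neg_e₃ {ν : ℝ³} (hν : ‖ν‖ = 1) (h0 : ν 0 = 0) (h1 : ν 1 = 0) :
    ν = e₃ ∨ ν = -e₃ := by
  rw [e₃_eq_single]
  exact EuclideanSpace.eq_single_or_eq_neg_single_of_norm_eq_one hν fun j hj => by
    fin_cases j <;> simp_all

namespace psiRot

open Real

variable (θ : ℝ) (x y : ℝ³)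

@[simp] theorem apply_zero : psiRot θ x 0 = x 0 * cos (2 * θ) + x 1 * sin (2 * θ) := rfl
@[simp] theorem apply_one : psiRot θ x 1 = x 0 * sin (2 * θ) - x 1 * cos (2 * θ) := rfl
@[simp] theorem apply_two : psiRot θ x 2 = -x 2 := rfl

theorem involutive : Function.Involutive (psiRot θ) := by
  intro x
  have h := sin_sq_add_cos_sq (2 * θ)
  refine EuclideanSpace.ext_fin_three ?_ ?_ ?_
  · simp only [apply_zero, apply_one]; linear_combination x 0 * h
  · simp only [apply_zero, apply_one]; linear_combination x 1 * h
  · simp only [apply_two, neg_neg]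

theorem inner_left : ⟪psiRot θ x, y⟫ = ⟪x, psiRot θ y⟫ := by
  simp only [PiLp.inner_apply, Fin.sum_univ_three, RCLike.inner_apply, conj_trivial,
    apply_zero, apply_one, apply_two]
  ring

variable {θ} {ν : ℝ³}

/-- The vectors fixed by `ψ_θ` are those on the axis `ξ_θ`. -/
theorem coords_of_eq_self (h : psiRot θ ν = ν) : ν 2 = 0 ∧ ν 0 * sin θ = ν 1 * cos θ := by
  have h0 := congrArg (· 0) h
  have h1 := congrArg (· 1) h
  have h2 := congrArg (· 2) h
  simp only [apply_zero, apply_one, apply_two, cos_two_mul, sin_two_mul] at h0 h1 h2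
  refine ⟨by linarith, ?_⟩
  linear_combination (-sin θ / 2) * h0 + (cos θ / 2) * h1
    + ν 1 * cos θ * sin_sq_add_cos_sq θ

/-- The vectors reversed by `ψ_θ` are those orthogonal to the axis `ξ_θ`. -/
theorem coords_of_eq_neg (h : psiRot θ ν = -ν) : ν 0 * cos θ + ν 1 * sin θ = 0 := by
  have h0 := congrArg (· 0) h
  have h1 := congrArg (· 1) h
  simp only [apply_zero, apply_one, PiLp.neg_apply, cos_two_mul, sin_two_mul] at h0 h1
  linear_combination (cos θ / 2) * h0 + (sin θ / 2) * h1
    + -ν 0 * cos θ * sin_sq_add_cos_sq θ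

theorem coords_of_pi_eq_self (h : psiRot π ν = ν) : ν 1 = 0 ∧ ν 2 = 0 := by
  obtain ⟨h2, h1⟩ := coords_of_eq_self h
  simp only [sin_pi, cos_pi, mul_zero, mul_neg, mul_one, zero_eq_neg] at h1
  exact ⟨h1, h2⟩

theorem coords_of_pi_eq_neg (h : psiRot π ν = -ν) : ν 0 = 0 := by
  simpa [sin_pi, cos_pi] using coords_of_eq_neg h

theorem eq_zero_of_eq_self_of_pi_eq_self (hθ : sin θ ≠ 0) (hπ : psiRot π ν = ν)
    (h : psiRot θ ν = ν) : ν = 0 := by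
  obtain ⟨h1, h2⟩ := coords_of_pi_eq_self hπ
  obtain ⟨-, h0⟩ := coords_of_eq_self h
  rw [h1, zero_mul, mul_eq_zero] at h0
  exact EuclideanSpace.ext_fin_three (h0.resolve_right hθ) h1 h2

theorem eq_e₃_or_eq_neg_e₃_of_eq_self_or_eq_neg (hs : sin θ ≠ 0) (hc : cos θ ≠ 0)
    (hν : ‖ν‖ = 1) (hπ : psiRot π ν = ν ∨ psiRot π ν = -ν)
    (h : psiRot θ ν = ν ∨ psiRot θ ν = -ν) : ν = e₃ ∨ ν = -e₃ := by
  have h01 : ν 0 = 0 ↔ ν 1 = 0 := by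
    rcases h with h | h
    · have := (coords_of_eq_self h).2
      constructor <;> intro hz <;> simp_all
    · have := coords_of_eq_neg h
      constructor <;> intro hz <;> simp_all
  have h0 : ν 0 = 0 := by
    rcases hπ with hπ | hπ
    · exact h01.2 (coords_of_pi_eq_self hπ).1
    · exact coords_of_pi_eq_neg hπ
  exact eq_e₃_or_eq_neg_e₃ hν h0 (h01.1 h0)

theorem eq_basis_of_eq_self_or_eq_neg_pi_div_two (hν : ‖ν‖ = 1)
    (hπ : psiRot π ν = ν ∨ psiRot π ν = -ν) (h : psiRot (π / 2) ν = ν ∨ psiRot (π / 2) ν = -ν) :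
    ν = e₁ ∨ ν = -e₁ ∨ ν = e₂ ∨ ν = -e₂ ∨ ν = e₃ ∨ ν = -e₃ := by
  rcases h with h | h
  · obtain ⟨h2, h0⟩ := coords_of_eq_self h
    simp only [sin_pi_div_two, cos_pi_div_two, mul_one, mul_zero] at h0
    have := eq_e₂_or_eq_neg_e₂ hν h0 h2
    tauto
  · have h1 := coords_of_eq_neg h
    simp only [sin_pi_div_two, cos_pi_div_two, mul_one, mul_zero, zero_add] at h1
    rcases hπ with hπ | hπ
    · have := eq_e₁_or_eq_neg_e₁ hν h1 (coords_of_pi_eq_self hπ).2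
      tauto
    · have := eq_e₃_or_eq_neg_e₃ hν (coords_of_pi_eq_neg hπ) h1
      tauto

end psiRot

open Real in
/-- Classification of `D_n`-equivariant half-spaces: let `n ≥ 2`, let `ν ∈ ℝ³` be
a unit vector, `s ∈ ℝ`, and `L = {x : ⟨x, ν⟩ > s}`.  If for every `ℓ ∈ {1, …, n}`
the rotation `ψ_{ℓπ/n}` by angle `π` around the axis `ξ_{ℓπ/n}` maps `L` onto `L`
or `ℝ³ \ L` up to a Lebesgue null set, then `s = 0`; if moreover `n ≥ 3` then
`ν = ±(0,0,1)`, and if `n = 2` then `ν ∈ {±(1,0,0), ±(0,1,0), ±(0,0,1)}`. -/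
theorem equivariant_halfspace_classification
    (n : ℕ) (hn : 2 ≤ n) (ν : EuclideanSpace ℝ (Fin 3)) (hν : ‖ν‖ = 1) (s : ℝ)
    (L : Set (EuclideanSpace ℝ (Fin 3)))
    (hL : L = {x : EuclideanSpace ℝ (Fin 3) | s < ⟪x, ν⟫})
    (heq : ∀ ℓ : ℕ, 1 ≤ ℓ → ℓ ≤ n →
      volume ((psiRot (ℓ * Real.pi / n) '' L) ∆ L) = 0 ∨
      volume ((psiRot (ℓ * Real.pi / n) '' L) ∆ Lᶜ) = 0) :
    s = 0 ∧
    (3 ≤ n → ν = e₃ ∨ ν = -e₃) ∧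
    (n = 2 → ν = e₁ ∨ ν = -e₁ ∨ ν = e₂ ∨ ν = -e₂ ∨ ν = e₃ ∨ ν = -e₃) := by
  subst hL
  have hdich (ℓ : ℕ) (h1 : 1 ≤ ℓ) (hℓ : ℓ ≤ n) :=
    apply_eq_self_or_eq_neg_of_image_halfspace volume (psiRot.involutive _)
      (psiRot.inner_left _) hν (heq ℓ h1 hℓ)
  have hπ := hdich n (by omega) le_rfl
  have hθ := hdich 1 le_rfl (by omega)
  have hn0 : (n : ℝ) ≠ 0 := by positivity
  rw [mul_div_cancel_left₀ _ hn0] at hπ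
  rw [Nat.cast_one, one_mul] at hθ
  have hpos : 0 < π / n := by positivity
  have hsin : sin (π / n) ≠ 0 :=
    (sin_pos_of_pos_of_lt_pi hpos (div_lt_self pi_pos (by norm_cast))).ne'
  have hs : s = 0 := by
    by_contra hs
    have hν0 := psiRot.eq_zero_of_eq_self_of_pi_eq_self hsin (hπ.resolve_right (hs ·.2))
      (hθ.resolve_right (hs ·.2))
    simp [hν0] at hν
  replace hπ := hπ.imp_right And.left
  replace hθ := hθ.imp_right And.left
  refine ⟨hs, fun h3 => ?_, fun h2 => ?_⟩
  · have hcos : cos (π / n) ≠ 0 := (cos_pos_of_mem_Ioo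
      ⟨by linarith [pi_pos], div_lt_div_of_pos_left pi_pos two_pos (by norm_cast)⟩).ne'
    exact psiRot.eq_e₃_or_eq_neg_e₃_of_eq_self_or_eq_neg hsin hcos hν hπ hθ
  · subst h2
    exact psiRot.eq_basis_of_eq_self_or_eq_neg_pi_div_two hν hπ (by simpa using hθ)
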